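/- arXiv:1206.4431 — 8 statements merged into one kernel-verified Lean document; each statement's English description precedes it below -/
import Mathlib

section
/- In any pregroup P: if ab is not defined but ac and c̄b are defined, then [ac]·[c̄b] is not defined. -/
/-- A pregroup in the sense of Stallings: a set with distinguished element `eps`,
an involution `inv`, and a partial multiplication with domain `defined`, whose
value (on the domain) is given by the total function `mul`. -/
structure Pregroup (P : Type*) where
  eps : P
  inv : P → P
  defined : P → P → Prop
  mul : P → P → P
  inv_inv : ∀ a, inv (inv a) = a
  /-- (P1) -/
  defined_eps_right : ∀ a, defined a eps
  defined_eps_left : ∀ a, defined eps a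
  mul_eps : ∀ a, mul a eps = a
  eps_mul : ∀ a, mul eps a = a
  /-- (P2) -/
  defined_inv_self : ∀ a, defined (inv a) a
  defined_self_inv : ∀ a, defined a (inv a)
  inv_mul_self : ∀ a, mul (inv a) a = eps
  mul_inv_self : ∀ a, mul a (inv a) = eps
  /-- (P3) -/
  defined_inv : ∀ a b, defined a b → defined (inv b) (inv a)
  mul_inv_rev : ∀ a b, defined a b → mul (inv b) (inv a) = inv (mul a b)
  /-- (P4) -/
  assoc_iff : ∀ a b c, defined a b → defined b c →
    (defined (mul a b) c ↔ defined a (mul b c))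
  assoc : ∀ a b c, defined a b → defined b c → defined (mul a b) c →
    mul (mul a b) c = mul a (mul b c)
  /-- (P5) -/
  p5 : ∀ a b c d, defined a b → defined b c → defined c d →
    defined (mul a b) c ∨ defined (mul b c) d

/-- The canonical subgroup `G_P` of a pregroup. -/
def Pregroup.GP {P : Type*} (pg : Pregroup P) : Set P :=
  {x | ∀ y, pg.defined x y ∧ pg.defined y x}

/-- `c` is a preconjugate of `a` by `u`: the product `ū a u` is defined
(in one of the two bracketings) with value `c`. -/
def Pregroup.PreConj {P : Type*} (pg : Pregroup P) (a u c : P) : Prop :=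
  (pg.defined (pg.inv u) a ∧ pg.defined (pg.mul (pg.inv u) a) u ∧
    pg.mul (pg.mul (pg.inv u) a) u = c) ∨
  (pg.defined a u ∧ pg.defined (pg.inv u) (pg.mul a u) ∧
    pg.mul (pg.inv u) (pg.mul a u) = c)

/-- Axiom (P7). -/
def Pregroup.P7 {P : Type*} (pg : Pregroup P) : Prop :=
  ∀ x y z, pg.defined y z → pg.defined x (pg.mul y z) → pg.mul y z ∉ pg.GP →
    ∀ s t, (s = x ∨ s = pg.inv x) → (t = y ∨ t = z) →
      pg.defined s t ∧ pg.defined t s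

/-- Axiom (P8). -/
def Pregroup.P8 {P : Type*} (pg : Pregroup P) : Prop :=
  ∀ a b, pg.defined a b → a ∈ pg.GP ∨ b ∈ pg.GP ∨ pg.mul a b ∈ pg.GP

/-- If `ab` is undefined but `ac` and `c̄b` are defined, then `[ac]·[c̄b]`
is undefined. -/
theorem pregroup_interleave_undefined {P : Type*} (pg : Pregroup P) (a b c : P)
    (hab : ¬ pg.defined a b) (hac : pg.defined a c)
    (hcb : pg.defined (pg.inv c) b) :
    ¬ pg.defined (pg.mul a c) (pg.mul (pg.inv c) b) := by
  intro h
  have hc : pg.defined c (pg.mul (pg.inv c) b) := by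
    have := (pg.assoc_iff c (pg.inv c) b (pg.defined_self_inv c) hcb).mp
    rw [pg.mul_inv_self] at this
    exact this (pg.defined_eps_left b)
  have heq : pg.mul c (pg.mul (pg.inv c) b) = b := by
    have := pg.assoc c (pg.inv c) b (pg.defined_self_inv c) hcb
      (by rw [pg.mul_inv_self]; exact pg.defined_eps_left b)
    rw [pg.mul_inv_self, pg.eps_mul] at this
    exact this.symm
  have := (pg.assoc_iff a c (pg.mul (pg.inv c) b) hac hc).mp h
  rw [heq] at this
  exact hab this
end

section
/- In any pregroup P: if ab is not defined but ac, c̄b, and bd are all defined, then [c̄b]·d is defined. -/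
/-- If `ab` is undefined but `ac`, `c̄b` and `bd` are defined, then
`[c̄b]·d` is defined. -/
theorem pregroup_cbd_defined {P : Type*} (pg : Pregroup P) (a b c d : P)
    (hab : ¬ pg.defined a b) (hac : pg.defined a c)
    (hcb : pg.defined (pg.inv c) b) (hbd : pg.defined b d) :
    pg.defined (pg.mul (pg.inv c) b) d := by
  have hcc : pg.defined c (pg.inv c) := pg.defined_self_inv c
  have hacc : pg.defined (pg.mul a c) (pg.inv c) := by
    refine (pg.assoc_iff a c (pg.inv c) hac hcc).mpr ?_
    rw [pg.mul_inv_self]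
    exact pg.defined_eps_right a
  have heq : pg.mul (pg.mul a c) (pg.inv c) = a := by
    rw [pg.assoc a c (pg.inv c) hac hcc hacc, pg.mul_inv_self, pg.mul_eps]
  rcases pg.p5 (pg.mul a c) (pg.inv c) b d hacc hcb hbd with h | h
  · rw [heq] at h; exact absurd h hab
  · exact h
end

section
/- In any pregroup P: if a·b·c is a reduced word (ab and bc undefined) and a·d̄ and d·b are defined, then [ad̄]·[db] is undefined and [db]·c is undefined; i.e., [ad̄][db]c is again a reduced word. -/
/-- If `a·b·c` is a reduced word and `ad̄`, `db` are defined, then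
`[ad̄]·[db]·c` is again a reduced word. -/
theorem pregroup_reduced_interleave {P : Type*} (pg : Pregroup P) (a b c d : P)
    (hab : ¬ pg.defined a b) (hbc : ¬ pg.defined b c)
    (had : pg.defined a (pg.inv d)) (hdb : pg.defined d b) :
    ¬ pg.defined (pg.mul a (pg.inv d)) (pg.mul d b) ∧
    ¬ pg.defined (pg.mul d b) c := by
  -- d̄·(db) is defined and equals b
  have h1 : pg.defined (pg.inv d) d := pg.defined_inv_self d
  have h2 : pg.defined (pg.inv d) (pg.mul d b) := by
    have := pg.assoc_iff (pg.inv d) d b h1 hdb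
    rw [pg.inv_mul_self] at this
    exact this.mp (pg.defined_eps_left b)
  have h3 : pg.mul (pg.inv d) (pg.mul d b) = b := by
    have hdef : pg.defined (pg.mul (pg.inv d) d) b := by
      rw [pg.inv_mul_self]; exact pg.defined_eps_left b
    have := pg.assoc (pg.inv d) d b h1 hdb hdef
    rw [pg.inv_mul_self, pg.eps_mul] at this
    exact this.symm
  have part1 : ¬ pg.defined (pg.mul a (pg.inv d)) (pg.mul d b) := by
    intro h
    have := (pg.assoc_iff a (pg.inv d) (pg.mul d b) had h2).mp h
    rw [h3] at this
    exact hab this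
  refine ⟨part1, ?_⟩
  intro h
  have := pg.p5 a (pg.inv d) (pg.mul d b) c had h2 h
  rcases this with h' | h'
  · exact part1 h'
  · rw [h3] at h'
    exact hbc h'
end

section
/- In a pregroup P satisfying axiom (P7), if c is a preconjugate of both a and b (i.e., c = [ū a u] = [v̄ b v] for some u, v ∈ P), then either c lies in the canonical subgroup G_P or b is a preconjugate of a. -/
namespace Pregroup

variable {P : Type*} (pg : Pregroup P)

lemma inv_rev {a b : P} (h : pg.defined a b) :
    pg.inv (pg.mul a b) = pg.mul (pg.inv b) (pg.inv a) :=
  (pg.mul_inv_rev a b h).symm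

lemma l_cancel {a b : P} (h : pg.defined a b) :
    pg.defined (pg.inv a) (pg.mul a b) ∧ pg.mul (pg.inv a) (pg.mul a b) = b := by
  have h1 := pg.defined_inv_self a
  have hL : pg.defined (pg.mul (pg.inv a) a) b := by
    rw [pg.inv_mul_self]; exact pg.defined_eps_left b
  have hd := (pg.assoc_iff (pg.inv a) a b h1 h).mp hL
  refine ⟨hd, ?_⟩
  have hv := pg.assoc (pg.inv a) a b h1 h hL
  rw [pg.inv_mul_self, pg.eps_mul] at hv
  exact hv.symm

lemma r_cancel {a b : P} (h : pg.defined a b) :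
    pg.defined (pg.mul a b) (pg.inv b) ∧ pg.mul (pg.mul a b) (pg.inv b) = a := by
  have h1 := pg.defined_self_inv b
  have hR : pg.defined a (pg.mul b (pg.inv b)) := by
    rw [pg.mul_inv_self]; exact pg.defined_eps_right a
  have hd := (pg.assoc_iff a b (pg.inv b) h h1).mpr hR
  refine ⟨hd, ?_⟩
  have hv := pg.assoc a b (pg.inv b) h h1 hd
  rw [pg.mul_inv_self, pg.mul_eps] at hv
  exact hv

lemma gp_inv {c : P} (h : pg.inv c ∈ pg.GP) : c ∈ pg.GP := by
  intro y
  obtain ⟨h1, h2⟩ := h (pg.inv y)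
  constructor
  · have := pg.defined_inv _ _ h2
    simpa [pg.inv_inv] using this
  · have := pg.defined_inv _ _ h1
    simpa [pg.inv_inv] using this

lemma preconj_inv {a u c : P} (h : pg.PreConj a u c) :
    pg.PreConj (pg.inv a) u (pg.inv c) := by
  rcases h with ⟨d1, d2, hv⟩ | ⟨d1, d2, hv⟩
  · right
    have e1 : pg.defined (pg.inv a) u := by
      have := pg.defined_inv _ _ d1
      simpa [pg.inv_inv] using this
    have hrev : pg.inv (pg.mul (pg.inv u) a) = pg.mul (pg.inv a) u := by
      rw [pg.inv_rev d1, pg.inv_inv]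
    have e2 : pg.defined (pg.inv u) (pg.mul (pg.inv a) u) := by
      have := pg.defined_inv _ _ d2
      rwa [hrev] at this
    refine ⟨e1, e2, ?_⟩
    rw [← hv, pg.inv_rev d2, hrev]
  · left
    have e1 : pg.defined (pg.inv u) (pg.inv a) := pg.defined_inv _ _ d1
    have hrev : pg.inv (pg.mul a u) = pg.mul (pg.inv u) (pg.inv a) := pg.inv_rev d1
    have e2 : pg.defined (pg.mul (pg.inv u) (pg.inv a)) u := by
      have := pg.defined_inv _ _ d2
      rwa [hrev, pg.inv_inv] at this
    refine ⟨e1, e2, ?_⟩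
    rw [← hv, pg.inv_rev d2, hrev, pg.inv_inv]

/-- Normal form for `PreConj b v c`: either `b = (v c) v̄` or `b = v (c v̄)`. -/
lemma preconj_norm {b v c : P} (h : pg.PreConj b v c) :
    (pg.defined v c ∧ pg.defined (pg.mul v c) (pg.inv v) ∧
      pg.mul (pg.mul v c) (pg.inv v) = b)
  ∨ (pg.defined c (pg.inv v) ∧ pg.defined v (pg.mul c (pg.inv v)) ∧
      pg.mul v (pg.mul c (pg.inv v)) = b) := by
  rcases h with ⟨e1, e2, hv⟩ | ⟨e1, e2, hv⟩
  · right
    obtain ⟨f1, f2⟩ := pg.r_cancel e2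
    rw [hv] at f1 f2
    obtain ⟨g1, g2⟩ := pg.l_cancel e1
    rw [pg.inv_inv] at g1 g2
    rw [← f2] at g1 g2
    exact ⟨f1, g1, g2⟩
  · left
    obtain ⟨f1, f2⟩ := pg.l_cancel e2
    rw [pg.inv_inv, hv] at f1 f2
    obtain ⟨g1, g2⟩ := pg.r_cancel e1
    rw [← f2] at g1 g2
    exact ⟨f1, g1, g2⟩

/-- Core step: if `c ∉ G_P`, `c` is a preconjugate of `a` by `u`, and
`b = (v c) v̄`, then `b` is a preconjugate of `a` by `u v̄`. -/
lemma core {a u v c b : P} (hp7 : pg.P7) (hc : c ∉ pg.GP)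
    (ha : pg.PreConj a u c)
    (d3 : pg.defined v c) (d4 : pg.defined (pg.mul v c) (pg.inv v))
    (hbv : pg.mul (pg.mul v c) (pg.inv v) = b) :
    pg.PreConj a (pg.mul u (pg.inv v)) b := by
  rcases ha with ⟨d1, d2, hcv⟩ | ⟨d1, d2, hcv⟩
  · -- c = (ū a) u
    have h7 := hp7 v (pg.mul (pg.inv u) a) u d2
      (by rw [hcv]; exact d3) (by rw [hcv]; exact hc)
    have huv : pg.defined u (pg.inv v) :=
      (h7 (pg.inv v) u (Or.inr rfl) (Or.inr rfl)).2
    have hvua : pg.defined v (pg.mul (pg.inv u) a) :=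
      (h7 v (pg.mul (pg.inv u) a) (Or.inl rfl) (Or.inl rfl)).1
    have hvu : pg.defined v (pg.inv u) := by
      have := pg.defined_inv _ _ huv
      simpa [pg.inv_inv] using this
    have hm1 : pg.defined (pg.mul v (pg.inv u)) a :=
      (pg.assoc_iff v (pg.inv u) a hvu d1).mpr hvua
    have val1 := pg.assoc v (pg.inv u) a hvu d1 hm1
    have hs2 : pg.defined (pg.mul v (pg.mul (pg.inv u) a)) u :=
      (pg.assoc_iff v (pg.mul (pg.inv u) a) u hvua d2).mpr (by rw [hcv]; exact d3)
    have val2 := pg.assoc v (pg.mul (pg.inv u) a) u hvua d2 hs2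
    have hs3 : pg.defined (pg.mul (pg.mul v (pg.mul (pg.inv u) a)) u) (pg.inv v) := by
      rw [val2, hcv]; exact d4
    have hs4 : pg.defined (pg.mul v (pg.mul (pg.inv u) a)) (pg.mul u (pg.inv v)) :=
      (pg.assoc_iff (pg.mul v (pg.mul (pg.inv u) a)) u (pg.inv v) hs2 huv).mp hs3
    have val4 := pg.assoc (pg.mul v (pg.mul (pg.inv u) a)) u (pg.inv v) hs2 huv hs3
    have hinvw : pg.inv (pg.mul u (pg.inv v)) = pg.mul v (pg.inv u) := by
      rw [pg.inv_rev huv, pg.inv_inv]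
    left
    refine ⟨by rw [hinvw]; exact hm1, ?_, ?_⟩
    · rw [hinvw, val1]; exact hs4
    · rw [hinvw, val1, ← val4, val2, hcv, hbv]
  · -- c = ū (a u)
    have h7 := hp7 v (pg.inv u) (pg.mul a u) d2
      (by rw [hcv]; exact d3) (by rw [hcv]; exact hc)
    have hauv : pg.defined (pg.mul a u) (pg.inv v) :=
      (h7 (pg.inv v) (pg.mul a u) (Or.inr rfl) (Or.inr rfl)).2
    have hvu : pg.defined v (pg.inv u) :=
      (h7 v (pg.inv u) (Or.inl rfl) (Or.inl rfl)).1
    have huv : pg.defined u (pg.inv v) := by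
      have := pg.defined_inv _ _ hvu
      simpa [pg.inv_inv] using this
    have hs1 : pg.defined a (pg.mul u (pg.inv v)) :=
      (pg.assoc_iff a u (pg.inv v) d1 huv).mp hauv
    have val1 := pg.assoc a u (pg.inv v) d1 huv hauv
    have hs2 : pg.defined (pg.mul v (pg.inv u)) (pg.mul a u) :=
      (pg.assoc_iff v (pg.inv u) (pg.mul a u) hvu d2).mpr (by rw [hcv]; exact d3)
    have val2 := pg.assoc v (pg.inv u) (pg.mul a u) hvu d2 hs2
    have hs3 : pg.defined (pg.mul (pg.mul v (pg.inv u)) (pg.mul a u)) (pg.inv v) := by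
      rw [val2, hcv]; exact d4
    have hs4 : pg.defined (pg.mul v (pg.inv u)) (pg.mul (pg.mul a u) (pg.inv v)) :=
      (pg.assoc_iff (pg.mul v (pg.inv u)) (pg.mul a u) (pg.inv v) hs2 hauv).mp hs3
    have val4 := pg.assoc (pg.mul v (pg.inv u)) (pg.mul a u) (pg.inv v) hs2 hauv hs3
    have hinvw : pg.inv (pg.mul u (pg.inv v)) = pg.mul v (pg.inv u) := by
      rw [pg.inv_rev huv, pg.inv_inv]
    right
    refine ⟨hs1, ?_, ?_⟩
    · rw [hinvw, ← val1]; exact hs4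
    · rw [hinvw, ← val1, ← val4, val2, hcv, hbv]

end Pregroup

/-- In a pregroup satisfying (P7), if `c` is a preconjugate of both `a` and
`b`, then `c ∈ G_P` or `b` is a preconjugate of `a`. -/
theorem pregroup_p7_preconj {P : Type*} (pg : Pregroup P) (hp7 : pg.P7)
    (a b c u v : P) (ha : pg.PreConj a u c) (hb : pg.PreConj b v c) :
    c ∈ pg.GP ∨ ∃ w, pg.PreConj a w b := by
  by_cases hc : c ∈ pg.GP
  · exact Or.inl hc
  refine Or.inr ⟨pg.mul u (pg.inv v), ?_⟩
  rcases pg.preconj_norm hb with ⟨d3, d4, hbv⟩ | ⟨f1, f2, hbv⟩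
  · exact pg.core hp7 hc ha d3 d4 hbv
  · have hc' : pg.inv c ∉ pg.GP := fun h => hc (pg.gp_inv h)
    have ha' := pg.preconj_inv ha
    have d3' : pg.defined v (pg.inv c) := by
      have := pg.defined_inv _ _ f1
      simpa [pg.inv_inv] using this
    have hrev : pg.inv (pg.mul c (pg.inv v)) = pg.mul v (pg.inv c) := by
      rw [pg.inv_rev f1, pg.inv_inv]
    have d4' : pg.defined (pg.mul v (pg.inv c)) (pg.inv v) := by
      have := pg.defined_inv _ _ f2
      rwa [hrev] at this
    have hbv' : pg.mul (pg.mul v (pg.inv c)) (pg.inv v) = pg.inv b := by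
      rw [← hbv, pg.inv_rev f2, hrev]
    have h := pg.preconj_inv (pg.core hp7 hc' ha' d3' d4' hbv')
    simpa [pg.inv_inv] using h
end

section
/- In a pregroup P satisfying axiom (P8), axiom (P6) holds: if fg is undefined but f b̄ and bg are defined, then b lies in the canonical subgroup G_P. -/
/-- (P8) implies (P6): if `fg` is undefined but `f b̄` and `bg` are defined,
then `b ∈ G_P`. -/
theorem pregroup_p8_imp_p6 {P : Type*} (pg : Pregroup P) (hp8 : pg.P8)
    (f g b : P) (hfg : ¬ pg.defined f g) (hfb : pg.defined f (pg.inv b))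
    (hbg : pg.defined b g) :
    b ∈ pg.GP := by
  have hinvGP : pg.inv b ∈ pg.GP → b ∈ pg.GP := by
    intro h y
    constructor
    · have := pg.defined_inv _ _ (h (pg.inv y)).2
      rwa [pg.inv_inv, pg.inv_inv] at this
    · have := pg.defined_inv _ _ (h (pg.inv y)).1
      rwa [pg.inv_inv, pg.inv_inv] at this
  rcases hp8 _ _ hfb with hf | hb | hc
  · exact absurd (hf g).1 hfg
  · exact hinvGP hb
  rcases hp8 _ _ hbg with hb | hg | hd
  · exact hb
  · exact absurd (hg f).2 hfg
  exfalso
  -- fg defined via (f b̄) b = f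
  have h1 : pg.defined (pg.inv b) b := pg.defined_inv_self b
  have h2 : pg.defined (pg.mul f (pg.inv b)) b := (hc b).1
  have h3 : pg.mul (pg.mul f (pg.inv b)) b = f := by
    rw [pg.assoc f (pg.inv b) b hfb h1 h2, pg.inv_mul_self, pg.mul_eps]
  have h4 : pg.defined (pg.mul (pg.mul f (pg.inv b)) b) g := by
    rw [pg.assoc_iff _ _ _ h2 hbg]
    exact (hc (pg.mul b g)).1
  rw [h3] at h4
  exact hfg h4
end

section
/- In a pregroup P satisfying axiom (P7), axiom (P6) holds: if fg is undefined but f b̄ and bg are defined, then b ∈ G_P. -/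
/-- (P7) implies (P6): if `fg` is undefined but `f b̄` and `bg` are defined,
then `b ∈ G_P`. -/
theorem pregroup_p7_imp_p6 {P : Type*} (pg : Pregroup P) (hp7 : pg.P7)
    (f g b : P) (hfg : ¬ pg.defined f g) (hfb : pg.defined f (pg.inv b))
    (hbg : pg.defined b g) :
    b ∈ pg.GP := by
  -- b̄ = f̄ · (f b̄)
  have h1 : pg.defined (pg.inv f) f := pg.defined_inv_self f
  have h2 : pg.defined (pg.mul (pg.inv f) f) (pg.inv b) := by
    rw [pg.inv_mul_self]; exact pg.defined_eps_left _
  have hY : pg.defined (pg.inv f) (pg.mul f (pg.inv b)) :=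
    (pg.assoc_iff _ _ _ h1 hfb).mp h2
  have hval : pg.mul (pg.inv f) (pg.mul f (pg.inv b)) = pg.inv b := by
    rw [← pg.assoc _ _ _ h1 hfb h2, pg.inv_mul_self, pg.eps_mul]
  have hg : pg.defined (pg.inv g) (pg.inv b) := pg.defined_inv _ _ hbg
  have hx : pg.defined (pg.inv g) (pg.mul (pg.inv f) (pg.mul f (pg.inv b))) := by
    rw [hval]; exact hg
  have hbinv : pg.inv b ∈ pg.GP := by
    by_contra hnot
    have hnot' : pg.mul (pg.inv f) (pg.mul f (pg.inv b)) ∉ pg.GP := by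
      rw [hval]; exact hnot
    have := (hp7 (pg.inv g) (pg.inv f) (pg.mul f (pg.inv b)) hY hx hnot'
      (pg.inv g) (pg.inv f) (Or.inl rfl) (Or.inl rfl)).1
    have := pg.defined_inv _ _ this
    rw [pg.inv_inv, pg.inv_inv] at this
    exact hfg this
  intro y
  have h3 := (hbinv (pg.inv y)).1
  have h4 := (hbinv (pg.inv y)).2
  have h3' := pg.defined_inv _ _ h3
  have h4' := pg.defined_inv _ _ h4
  simp only [pg.inv_inv] at h3' h4'
  exact ⟨h4', h3'⟩
end

section
/- In a pregroup P satisfying axiom (P8), if a ∈ P \ G_P and b is a preconjugate of a (b = [c̄ a c] for some c ∈ P), then b = [h̄ a h] for some h in the canonical subgroup G_P. -/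

theorem Pregroup.inv_mem_GP {P : Type*} (pg : Pregroup P) {x : P}
    (hx : x ∈ pg.GP) : pg.inv x ∈ pg.GP := by
  intro y
  constructor
  · have := pg.defined_inv (pg.inv y) x (hx (pg.inv y)).2
    rwa [pg.inv_inv] at this
  · have := pg.defined_inv x (pg.inv y) (hx (pg.inv y)).1
    rwa [pg.inv_inv] at this

/-- In a pregroup satisfying (P8), every preconjugate of `a ∉ G_P` is a
preconjugate by an element of `G_P`. -/
theorem pregroup_p8_preconj {P : Type*} (pg : Pregroup P) (hp8 : pg.P8)
    (a b c : P) (ha : a ∉ pg.GP) (hb : pg.PreConj a c b) :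
    ∃ h, h ∈ pg.GP ∧ pg.PreConj a h b := by
  rcases hb with ⟨h1, h2, h3⟩ | ⟨h1, h2, h3⟩
  · rcases hp8 _ _ h1 with hc | hA | hg
    · exact ⟨c, by simpa [pg.inv_inv] using pg.inv_mem_GP hc, Or.inl ⟨h1, h2, h3⟩⟩
    · exact absurd hA ha
    · set g := pg.mul (pg.inv c) a with hgdef
      have hginv : pg.inv g ∈ pg.GP := pg.inv_mem_GP hg
      -- a = c * g
      have ha_eq : a = pg.mul c g := by
        have hd1 := pg.defined_self_inv c
        have hd3 : pg.defined (pg.mul c (pg.inv c)) a := by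
          rw [pg.mul_inv_self]; exact pg.defined_eps_left a
        have := pg.assoc c (pg.inv c) a hd1 h1 hd3
        rwa [pg.mul_inv_self, pg.eps_mul] at this
      -- c = a * g⁻¹
      have hc_eq : pg.mul a (pg.inv g) = c := by
        have hd1 : pg.defined c g := (hg c).2
        have hd2 := pg.defined_self_inv g
        have hd3 : pg.defined (pg.mul c g) (pg.inv g) := by
          rw [← ha_eq]; exact (hginv a).2
        have := pg.assoc c g (pg.inv g) hd1 hd2 hd3
        rw [pg.mul_inv_self, pg.mul_eps] at this
        rw [ha_eq, this]
      have hda : pg.defined g a := (hg a).1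
      have hdg : pg.defined a (pg.inv g) := (hginv a).2
      have hdef : pg.defined (pg.mul g a) (pg.inv g) := by
        rw [pg.assoc_iff g a (pg.inv g) hda hdg, hc_eq]
        exact (hg c).1
      refine ⟨pg.inv g, hginv, Or.inl ?_⟩
      rw [pg.inv_inv]
      refine ⟨hda, hdef, ?_⟩
      rw [pg.assoc g a (pg.inv g) hda hdg hdef, hc_eq]; exact h3
  · rcases hp8 _ _ h1 with hA | hc | hg
    · exact absurd hA ha
    · exact ⟨c, hc, Or.inr ⟨h1, h2, h3⟩⟩
    · set g := pg.mul a c with hgdef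
      have hginv : pg.inv g ∈ pg.GP := pg.inv_mem_GP hg
      have hc_eq : c = pg.mul (pg.inv a) g := by
        have hd1 := pg.defined_inv_self a
        have hd3 : pg.defined (pg.mul (pg.inv a) a) c := by
          rw [pg.inv_mul_self]; exact pg.defined_eps_left c
        have := pg.assoc (pg.inv a) a c hd1 h1 hd3
        rwa [pg.inv_mul_self, pg.eps_mul] at this
      have hcbar : pg.mul (pg.inv g) a = pg.inv c := by
        have hd : pg.defined (pg.inv a) g := (hg (pg.inv a)).2
        rw [hc_eq, ← pg.mul_inv_rev (pg.inv a) g hd, pg.inv_inv]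
      refine ⟨g, hg, Or.inl ?_⟩
      refine ⟨(hginv a).1, ?_, ?_⟩
      · rw [hcbar]; exact h2
      · rw [hcbar]; exact h3
end

section
/- Let S ⊆ Γ* × Γ* be a standard semi-Thue system (no rule with empty left side, 2 ≤ m(S) = sup |ℓ| < ∞) with |r| ≤ |ℓ| for all rules, and let C(S) be a relation on cyclic words containing the cyclic one-step rewriting of S and contained in conjugacy of Γ*/S, where Γ*/S is a group. If C(S) is confluent on all cyclic words, then two words u, v are conjugate in Γ*/S if and only if there is a cyclic word t with u∼ →*_{C(S)} t ←*_{C(S)} v∼. -/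
/-- One-step rewriting relation of a semi-Thue system `S`. -/
def SemiThueStep {Γ : Type*} (S : Set (List Γ × List Γ)) (u v : List Γ) : Prop :=
  ∃ (p q l r : List Γ), (l, r) ∈ S ∧ u = p ++ l ++ q ∧ v = p ++ r ++ q

/-- Transposition: `u ∼ v` iff they are cyclic permutations of one another. -/
def Transp {Γ : Type*} (u v : List Γ) : Prop :=
  ∃ x y : List Γ, u = x ++ y ∧ v = y ++ x

/-- One-step rewriting of `S` on cyclic words (on representatives). -/
def CycStep {Γ : Type*} (S : Set (List Γ × List Γ)) (u v : List Γ) : Prop :=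
  ∃ u' v', Transp u u' ∧ SemiThueStep S u' v' ∧ Transp v' v

/-- Conjugacy of the words `u` and `v` in the quotient monoid `Γ*/S`. -/
def ThueConj {Γ : Type*} (S : Set (List Γ × List Γ)) (u v : List Γ) : Prop :=
  ∃ x y : List Γ, Relation.EqvGen (SemiThueStep S) (x ++ y) [] ∧
    Relation.EqvGen (SemiThueStep S) (x ++ u ++ y) v

/-!
Since `Γ*/S` is a group, conjugacy `x u y ≡ v` with `x y ≡ 1` can be rewritten as
`u ≡ y x u ∼ x u y ≡ v`, so conjugacy in `Γ*/S` is the equivalence generated by rewriting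
and transposition. By (C1) and (C2) it is therefore also the equivalence generated by
`→_C ∪ ∼`, and for a confluent relation that equivalence is joinability (Church–Rosser).
-/

open Relation

theorem Relation.EqvGen.map {α β : Type*} {r : α → α → Prop} {s : β → β → Prop} (f : α → β)
    (hf : ∀ a b, r a b → s (f a) (f b)) {a b : α} (h : EqvGen r a b) :
    EqvGen s (f a) (f b) := by
  induction h with
  | rel a b h => exact .rel _ _ (hf a b h)
  | refl a => exact .refl _
  | symm a b _ ih => exact .symm _ _ ih
  | trans a b c _ _ ih₁ ih₂ => exact .trans _ _ _ ih₁ ih₂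

theorem eqvGen_iff_join_reflTransGen {α : Type*} {r : α → α → Prop} {a b : α}
    (h : ∀ a b c, ReflTransGen r a b → ReflTransGen r a c → Join (ReflTransGen r) b c) :
    EqvGen r a b ↔ Join (ReflTransGen r) a b :=
  ⟨fun hab => (equivalence_join h).eqvGen_iff.1
      (EqvGen.mono (fun _ _ h => le_join_of_refl _ _ (.single h)) _ _ hab),
    join_le_of_equivalence_of_le (EqvGen.is_equivalence r) (EqvGen.reflTransGen_le_eqvGen r) a b⟩

section

variable {Γ : Type*} {S : Set (List Γ × List Γ)} {u v w x y : List Γ}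

abbrev ThueEqv (S : Set (List Γ × List Γ)) : List Γ → List Γ → Prop :=
  EqvGen (SemiThueStep S)

abbrev QuotientIsGroup (S : Set (List Γ × List Γ)) : Prop :=
  ∀ u : List Γ, ∃ v : List Γ, ThueEqv S (u ++ v) [] ∧ ThueEqv S (v ++ u) []

theorem Transp.refl (u : List Γ) : Transp u u := ⟨u, [], by simp, by simp⟩

theorem CycStep.of_semiThueStep (h : SemiThueStep S u v) : CycStep S u v :=
  ⟨u, v, .refl u, h, .refl v⟩

theorem SemiThueStep.append_append (a b : List Γ) (h : SemiThueStep S u v) :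
    SemiThueStep S (a ++ u ++ b) (a ++ v ++ b) := by
  obtain ⟨p, q, l, r, hlr, rfl, rfl⟩ := h
  exact ⟨a ++ p, q ++ b, l, r, hlr, by simp, by simp⟩

theorem ThueEqv.append_append (a b : List Γ) (h : ThueEqv S u v) :
    ThueEqv S (a ++ u ++ b) (a ++ v ++ b) :=
  EqvGen.map (a ++ · ++ b) (fun _ _ => SemiThueStep.append_append a b) h

theorem ThueEqv.append_left (a : List Γ) (h : ThueEqv S u v) : ThueEqv S (a ++ u) (a ++ v) := by
  simpa using ThueEqv.append_append a [] h

theorem ThueEqv.append_right (b : List Γ) (h : ThueEqv S u v) : ThueEqv S (u ++ b) (v ++ b) := by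
  simpa using ThueEqv.append_append [] b h

theorem ThueEqv.nil_comm
    (hgroup : QuotientIsGroup S)
    (h : ThueEqv S (x ++ y) []) : ThueEqv S (y ++ x) [] := by
  obtain ⟨x', -, hx'x⟩ := hgroup x
  -- `y ≡ (x' x) y = x' (x y) ≡ x'`
  have hy : ThueEqv S y x' := by
    have h₁ := ThueEqv.append_right y hx'x
    have h₂ := ThueEqv.append_left x' h
    simp only [List.append_assoc, List.nil_append, List.append_nil] at h₁ h₂
    exact (h₁.symm _ _).trans _ _ _ h₂
  exact (ThueEqv.append_right x hy).trans _ _ _ hx'x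

theorem ThueConj.of_thueEqv (h : ThueEqv S u v) : ThueConj S u v :=
  ⟨[], [], .refl _, by simpa using h⟩

theorem ThueConj.trans (huv : ThueConj S u v) (hvw : ThueConj S v w) : ThueConj S u w := by
  obtain ⟨x, y, hxy, hu⟩ := huv
  obtain ⟨a, b, hab, hv⟩ := hvw
  refine ⟨a ++ x, y ++ b, ?_, ?_⟩
  · simpa using (ThueEqv.append_append a b hxy).trans _ _ _ (by simpa using hab)
  · simpa using (ThueEqv.append_append a b hu).trans _ _ _ hv

theorem ThueConj.symm
    (hgroup : QuotientIsGroup S)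
    (h : ThueConj S u v) : ThueConj S v u := by
  obtain ⟨x, y, hxy, hu⟩ := h
  have hyx := ThueEqv.nil_comm hgroup hxy
  refine ⟨y, x, hyx, ?_⟩
  -- `y v x ≡ (y x) u (y x) ≡ u`
  have hv : ThueEqv S (y ++ v ++ x) (y ++ x ++ u ++ (y ++ x)) := by
    simpa using (ThueEqv.append_append y x hu).symm
  have hyxu : ThueEqv S (y ++ x ++ u ++ (y ++ x)) u := by
    simpa using (ThueEqv.append_append [] (y ++ x) (ThueEqv.append_right u hyx)).trans _ _ _
      (ThueEqv.append_left u hyx)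
  exact hv.trans _ _ _ hyxu

theorem ThueConj.of_transp
    (hgroup : QuotientIsGroup S)
    (h : Transp u v) : ThueConj S u v := by
  obtain ⟨p, q, rfl, rfl⟩ := h
  obtain ⟨q', hqq', -⟩ := hgroup q
  exact ⟨q, q', hqq', by simpa using ThueEqv.append_left (q ++ p) hqq'⟩

theorem thueConj_equivalence
    (hgroup : QuotientIsGroup S) :
    Equivalence (ThueConj S) :=
  ⟨fun u => .of_thueEqv (.refl u), ThueConj.symm hgroup, ThueConj.trans⟩

theorem thueConj_iff_eqvGen
    (hgroup : QuotientIsGroup S)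
    {R : List Γ → List Γ → Prop} (hstep : SemiThueStep S ≤ R) (htransp : Transp ≤ R)
    (hR : R ≤ ThueConj S) : ThueConj S u v ↔ EqvGen R u v := by
  refine ⟨fun ⟨x, y, hxy, huv⟩ => ?_,
    fun h => (thueConj_equivalence hgroup).eqvGen_iff.1 (EqvGen.mono hR _ _ h)⟩
  have hu : ThueEqv S u (y ++ x ++ u) := by
    simpa using (ThueEqv.append_right u (ThueEqv.nil_comm hgroup hxy)).symm
  have hcyc : R (y ++ x ++ u) (x ++ u ++ y) := htransp _ _ ⟨y, x ++ u, by simp, by simp⟩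
  exact (EqvGen.mono hstep _ _ hu).trans _ _ _ ((EqvGen.rel _ _ hcyc).trans _ _ _
    (EqvGen.mono hstep _ _ huv))

end

theorem conjugate_iff_common_descendant_general {Γ : Type*}
    (S : Set (List Γ × List Γ)) (C : List Γ → List Γ → Prop)
    -- Γ*/S is a group
    (hgroup : ∀ u : List Γ, ∃ v : List Γ,
      Relation.EqvGen (SemiThueStep S) (u ++ v) [] ∧
      Relation.EqvGen (SemiThueStep S) (v ++ u) [])
    -- (C1): the cyclic one-step rewriting of S is contained in C
    (hC1 : ∀ u v, CycStep S u v → C u v)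
    -- (C2): C-related words are conjugate in Γ*/S
    (hC2 : ∀ u v, C u v → ThueConj S u v)
    -- C is confluent on all cyclic words
    (hCconf : ∀ x y z,
      Relation.ReflTransGen (fun a b => C a b ∨ Transp a b) x y →
      Relation.ReflTransGen (fun a b => C a b ∨ Transp a b) x z →
      ∃ w, Relation.ReflTransGen (fun a b => C a b ∨ Transp a b) y w ∧
           Relation.ReflTransGen (fun a b => C a b ∨ Transp a b) z w) :
    ∀ u v : List Γ, ThueConj S u v ↔
      ∃ t, Relation.ReflTransGen (fun a b => C a b ∨ Transp a b) u t ∧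
           Relation.ReflTransGen (fun a b => C a b ∨ Transp a b) v t := by
  intro u v
  have hC : ∀ a b, C a b ∨ Transp a b → ThueConj S a b :=
    fun a b h => h.elim (hC2 a b) (ThueConj.of_transp hgroup)
  rw [thueConj_iff_eqvGen hgroup (fun a b h => Or.inl (hC1 a b (.of_semiThueStep h)))
    (fun _ _ => Or.inr) hC]
  exact eqvGen_iff_join_reflTransGen hCconf

/-- If `S` is a standard confluent semi-Thue system with non-length-increasing
rules whose quotient `Γ*/S` is a group, and `C` is a relation on cyclic words
satisfying (C1) and (C2) which is confluent on all cyclic words, then two words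
are conjugate in `Γ*/S` iff they have a common descendant under
`→_C ∪ ∼` (the reflexive-on-cyclic-words closure of `C`). -/
theorem conjugate_iff_common_descendant {Γ : Type*}
    (S : Set (List Γ × List Γ)) (C : List Γ → List Γ → Prop)
    -- S standard: no empty left-hand sides, 2 ≤ m(S) < ∞
    (hstd1 : ∀ r : List Γ, ([], r) ∉ S)
    (hstd2 : ∃ l r : List Γ, (l, r) ∈ S ∧ 2 ≤ l.length)
    (hstd3 : ∃ N : ℕ, ∀ l r : List Γ, (l, r) ∈ S → l.length ≤ N)
    -- no length-increasing rules
    (hlen : ∀ l r : List Γ, (l, r) ∈ S → r.length ≤ l.length)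
    -- S confluent
    (hconf : ∀ x y z, Relation.ReflTransGen (SemiThueStep S) x y →
      Relation.ReflTransGen (SemiThueStep S) x z →
      ∃ w, Relation.ReflTransGen (SemiThueStep S) y w ∧
           Relation.ReflTransGen (SemiThueStep S) z w)
    -- Γ*/S is a group
    (hgroup : ∀ u : List Γ, ∃ v : List Γ,
      Relation.EqvGen (SemiThueStep S) (u ++ v) [] ∧
      Relation.EqvGen (SemiThueStep S) (v ++ u) [])
    -- C is a relation on cyclic words (invariant under transposition)
    (hCcyc : ∀ u u' v v', Transp u u' → Transp v v' → C u v → C u' v')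
    -- (C1): the cyclic one-step rewriting of S is contained in C
    (hC1 : ∀ u v, CycStep S u v → C u v)
    -- (C2): C-related words are conjugate in Γ*/S
    (hC2 : ∀ u v, C u v → ThueConj S u v)
    -- C is confluent on all cyclic words
    (hCconf : ∀ x y z,
      Relation.ReflTransGen (fun a b => C a b ∨ Transp a b) x y →
      Relation.ReflTransGen (fun a b => C a b ∨ Transp a b) x z →
      ∃ w, Relation.ReflTransGen (fun a b => C a b ∨ Transp a b) y w ∧
           Relation.ReflTransGen (fun a b => C a b ∨ Transp a b) z w) :
    ∀ u v : List Γ, ThueConj S u v ↔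
      ∃ t, Relation.ReflTransGen (fun a b => C a b ∨ Transp a b) u t ∧
           Relation.ReflTransGen (fun a b => C a b ∨ Transp a b) v t :=
  conjugate_iff_common_descendant_general S C hgroup hC1 hC2 hCconf
end
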